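/- arXiv:2002.08459 — 2 statements merged into one kernel-verified Lean document; each statement's English description precedes it below -/
import Mathlib

section
/- Let α, β ∈ (0,1) with α + β > 1. There exists a constant C depending only on α and β such that for all continuous 2π-periodic functions f, g : ℝ → ℝ, if f is α-Hölder with constant C_f and g is β-Hölder with constant C_g, then their circle convolution h is continuously differentiable on ℝ, its derivative satisfies |h′(t)| ≤ (C/(α+β−1)) · C_f · C_g for all t, and h′ is (α+β−1)-Hölder: |h′(t) − h′(s)| ≤ C · C_f · C_g · |t − s|^(α+β−1) for all t, s ∈ ℝ. -/
/-!
Put `h = f ⋆ g` and `σ = α + β - 1`. Since `f` and `g` are `2π`-periodic, the substitution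
`x ↦ x + δ` gives
`h (t + 2δ) - 2 h (t + δ) + h t = ∫ (f (x + δ) - f x) (g (t + δ - x) - g (t - x)) dx`,
so the second differences of `h` are `O(δ ^ (1 + σ))`. For any continuous function with this
property the difference quotients `D_δ h t = (h (t + δ) - h t) / δ` satisfy
`|D_{2ε} h - D_ε h| ≤ M ε ^ σ / 2`; along dyadic steps they converge uniformly at a geometric rate,
the limit is `h'`, and `|D_δ h - h'| = O(δ ^ σ)`. Comparing `h' t` and `h' (t + δ)` with
`D_δ h t` and `D_δ h (t + δ)`, whose difference is a second difference divided by `δ`, gives the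
Hölder bound; `D_{2π} h = 0` by periodicity, which bounds `h'`.
-/

open Real Filter Topology

theorem continuous_of_abs_sub_le_rpow {u : ℝ → ℝ} {C σ : ℝ} (hσ : 0 < σ)
    (hu : ∀ t s, |u t - u s| ≤ C * |t - s| ^ σ) : Continuous u := by
  refine continuous_iff_continuousAt.2 fun t => tendsto_iff_norm_sub_tendsto_zero.2 ?_
  have hlim : Tendsto (fun s => C * |s - t| ^ σ) (𝓝 t) (𝓝 0) := by
    have : Continuous fun s => C * |s - t| ^ σ :=
      continuous_const.mul ((continuous_abs.comp (continuous_sub_right t)).rpow_const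
        fun _ => Or.inr hσ.le)
    simpa [zero_rpow hσ.ne'] using this.tendsto t
  exact squeeze_zero (fun _ => norm_nonneg _) (fun s => hu s t) hlim

theorem exists_tendstoUniformly_of_dist_le_geometric {α β : Type*} [PseudoMetricSpace β]
    [CompleteSpace β] {q : ℕ → α → β} {C r : ℝ} (hr₀ : 0 ≤ r) (hr : r < 1)
    (hq : ∀ n x, dist (q n x) (q (n + 1) x) ≤ C * r ^ n) :
    ∃ φ : α → β, TendstoUniformly q φ atTop := by
  choose φ hφ using fun x =>
    cauchySeq_tendsto_of_complete (cauchySeq_of_le_geometric r C hr (hq · x))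
  refine ⟨φ, Metric.tendstoUniformly_iff.2 fun ε hε => ?_⟩
  have hbound : Tendsto (fun n => C * r ^ n / (1 - r)) atTop (𝓝 0) := by
    simpa using ((tendsto_pow_atTop_nhds_zero_of_lt_one hr₀ hr).const_mul C).div_const (1 - r)
  filter_upwards [(tendsto_order.1 hbound).2 ε hε] with n hn x
  rw [dist_comm]
  exact (dist_le_of_le_geometric_of_tendsto r C hr (hq · x) (hφ x) n).trans_lt hn

noncomputable def diffQuot (h : ℝ → ℝ) (δ t : ℝ) : ℝ := (h (t + δ) - h t) / δ

theorem hasDerivAt_diffQuot {G g : ℝ → ℝ} (hG : ∀ x, HasDerivAt G (g x) x) (δ t : ℝ) :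
    HasDerivAt (diffQuot G δ) (diffQuot g δ t) t :=
  (((hG (t + δ)).comp_add_const t δ).sub (hG t)).div_const δ

theorem tendsto_diffQuot_dyadic {h : ℝ → ℝ} {h'₀ t δ : ℝ} (hd : HasDerivAt h h'₀ t)
    (hδ : 0 < δ) : Tendsto (fun n : ℕ => diffQuot h (δ / 2 ^ n) t) atTop (𝓝 h'₀) := by
  have hlim : Tendsto (fun n : ℕ => δ / 2 ^ n) atTop (𝓝[>] 0) := by
    refine tendsto_nhdsWithin_of_tendsto_nhds_of_eventually_within _ ?_
      (Eventually.of_forall fun n => by simp only [Set.mem_Ioi]; positivity)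
    exact tendsto_const_nhds.div_atTop (tendsto_pow_atTop_atTop_of_one_lt one_lt_two)
  refine (hd.tendsto_slope_zero_right.comp hlim).congr fun n => ?_
  simp [diffQuot, div_eq_inv_mul]

def HasSecondDiffBound (h : ℝ → ℝ) (M σ : ℝ) : Prop :=
  ∀ t δ, 0 < δ → |h (t + 2 * δ) - 2 * h (t + δ) + h t| ≤ M * δ ^ (1 + σ)

section SecondDifference

variable {h : ℝ → ℝ} {M σ : ℝ}

theorem abs_diffQuot_add_sub_diffQuot_le (H : HasSecondDiffBound h M σ) {δ : ℝ} (hδ : 0 < δ)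
    (t : ℝ) :
    |diffQuot h δ (t + δ) - diffQuot h δ t| ≤ M * δ ^ σ := by
  have hsplit : diffQuot h δ (t + δ) - diffQuot h δ t
      = (h (t + 2 * δ) - 2 * h (t + δ) + h t) / δ := by
    unfold diffQuot; ring_nf
  rw [hsplit, abs_div, abs_of_pos hδ, div_le_iff₀ hδ, mul_assoc, ← rpow_add_one hδ.ne',
    add_comm σ]
  exact H t δ hδ

theorem abs_diffQuot_two_mul_sub_le (H : HasSecondDiffBound h M σ) {ε : ℝ} (hε : 0 < ε)
    (t : ℝ) :
    |diffQuot h (2 * ε) t - diffQuot h ε t| ≤ M / 2 * ε ^ σ := by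
  have hsplit : diffQuot h (2 * ε) t - diffQuot h ε t
      = (diffQuot h ε (t + ε) - diffQuot h ε t) / 2 := by
    unfold diffQuot; field_simp; ring_nf
  rw [hsplit, abs_div, abs_two]
  linarith [abs_diffQuot_add_sub_diffQuot_le H hε t]

theorem dist_diffQuot_dyadic_le (H : HasSecondDiffBound h M σ) {δ : ℝ} (hδ : 0 < δ) (t : ℝ)
    (n : ℕ) :
    dist (diffQuot h (δ / 2 ^ n) t) (diffQuot h (δ / 2 ^ (n + 1)) t)
      ≤ M / 2 * δ ^ σ / 2 ^ σ * (2 ^ σ)⁻¹ ^ n := by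
  have hhalf : δ / 2 ^ n = 2 * (δ / 2 ^ (n + 1)) := by rw [pow_succ]; field_simp
  have hscale : (δ / 2 ^ (n + 1)) ^ σ = δ ^ σ / 2 ^ σ * (2 ^ σ)⁻¹ ^ n := by
    rw [div_rpow hδ.le (by positivity), ← rpow_pow_comm zero_le_two, pow_succ, inv_pow]
    field_simp
  rw [dist_eq_norm, norm_eq_abs, hhalf, mul_div_assoc, mul_assoc, ← hscale]
  exact abs_diffQuot_two_mul_sub_le H (by positivity) t

theorem abs_diffQuot_sub_le_of_hasDerivAt (H : HasSecondDiffBound h M σ) (hσ : 0 < σ)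
    {h'₀ δ t : ℝ} (hd : HasDerivAt h h'₀ t) (hδ : 0 < δ) :
    |diffQuot h δ t - h'₀| ≤ M / (2 * (2 ^ σ - 1)) * δ ^ σ := by
  have h2σ : 1 < (2:ℝ) ^ σ := one_lt_rpow one_lt_two hσ
  have hgeom := dist_le_of_le_geometric_of_tendsto₀ _ _ (inv_lt_one_of_one_lt₀ h2σ)
    (dist_diffQuot_dyadic_le H hδ t) (tendsto_diffQuot_dyadic hd hδ)
  rw [pow_zero, div_one, dist_eq_norm, norm_eq_abs] at hgeom
  convert hgeom using 1
  have : (2:ℝ) ^ σ - 1 ≠ 0 := by linarith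
  field_simp

theorem exists_hasDerivAt_of_secondDiff (H : HasSecondDiffBound h M σ) (hc : Continuous h)
    (hσ : 0 < σ) :
    ∃ h' : ℝ → ℝ, ∀ t, HasDerivAt h (h' t) t := by
  have h2σ : 1 < (2:ℝ) ^ σ := one_lt_rpow one_lt_two hσ
  obtain ⟨φ, hφ⟩ := exists_tendstoUniformly_of_dist_le_geometric (by positivity)
    (inv_lt_one_of_one_lt₀ h2σ) fun n t => dist_diffQuot_dyadic_le H one_pos t n
  have hG x : HasDerivAt (fun u => ∫ s in (0:ℝ)..u, h s) (h x) x :=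
    (hc.integral_hasStrictDerivAt 0 x).hasDerivAt
  -- The averages `diffQuot G (1 / 2 ^ n)` of `h` over dyadic intervals, `G` a primitive of `h`,
  -- converge to `h`, and their derivatives `diffQuot h (1 / 2 ^ n)` converge uniformly.
  exact ⟨φ, hasDerivAt_of_tendstoUniformly hφ
    (Eventually.of_forall fun n => hasDerivAt_diffQuot hG _)
    fun t => tendsto_diffQuot_dyadic (hG t) one_pos⟩

variable {h' : ℝ → ℝ}

theorem abs_deriv_add_sub_le (H : HasSecondDiffBound h M σ) (hσ : 0 < σ)
    (hd : ∀ t, HasDerivAt h (h' t) t) {δ : ℝ} (hδ : 0 < δ) (t : ℝ) :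
    |h' (t + δ) - h' t| ≤ M * 2 ^ σ / (2 ^ σ - 1) * δ ^ σ := by
  have ht := abs_diffQuot_sub_le_of_hasDerivAt H hσ (hd t) hδ
  have htδ := abs_diffQuot_sub_le_of_hasDerivAt H hσ (hd (t + δ)) hδ
  have hmid := abs_diffQuot_add_sub_diffQuot_le H hδ t
  have hconst : M * 2 ^ σ / (2 ^ σ - 1) * δ ^ σ
      = 2 * (M / (2 * (2 ^ σ - 1)) * δ ^ σ) + M * δ ^ σ := by
    have : (2:ℝ) ^ σ - 1 ≠ 0 := by linarith [one_lt_rpow one_lt_two hσ]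
    field_simp; ring
  rw [hconst]
  rw [abs_le] at *
  constructor <;> linarith

theorem abs_deriv_sub_le (H : HasSecondDiffBound h M σ) (hσ : 0 < σ)
    (hd : ∀ t, HasDerivAt h (h' t) t) (t s : ℝ) :
    |h' t - h' s| ≤ M * 2 ^ σ / (2 ^ σ - 1) * |t - s| ^ σ := by
  rcases lt_trichotomy s t with hst | rfl | hts
  · simpa [abs_of_pos (sub_pos.2 hst)] using abs_deriv_add_sub_le H hσ hd (sub_pos.2 hst) s
  · simp [zero_rpow hσ.ne']
  · rw [abs_sub_comm, abs_sub_comm t]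
    simpa [abs_of_pos (sub_pos.2 hts)] using abs_deriv_add_sub_le H hσ hd (sub_pos.2 hts) t

theorem abs_deriv_le_of_periodic (H : HasSecondDiffBound h M σ) (hσ : 0 < σ)
    (hd : ∀ t, HasDerivAt h (h' t) t) {p : ℝ} (hp : Function.Periodic h p) (hp₀ : 0 < p)
    (t : ℝ) :
    |h' t| ≤ M / (2 * (2 ^ σ - 1)) * p ^ σ := by
  simpa [diffQuot, hp t] using abs_diffQuot_sub_le_of_hasDerivAt H hσ (hd t) hp₀

end SecondDifference

noncomputable def circleConv (f g : ℝ → ℝ) (t : ℝ) : ℝ := ∫ x in (0:ℝ)..2 * π, f x * g (t - x)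

section CircleConv

variable {f g : ℝ → ℝ}

theorem circleConv_periodic (hg : Function.Periodic g (2 * π)) :
    Function.Periodic (circleConv f g) (2 * π) := fun t => by
  simp only [circleConv, add_sub_right_comm, hg _]

theorem continuous_circleConv (hf : Continuous f) (hg : Continuous g) :
    Continuous (circleConv f g) :=
  intervalIntegral.continuous_parametric_intervalIntegral_of_continuous'
    (by fun_prop) _ _

theorem circleConv_add (hf : Function.Periodic f (2 * π)) (hg : Function.Periodic g (2 * π))
    (t δ : ℝ) : circleConv f g (t + δ) = ∫ x in (0:ℝ)..2 * π, f (x + δ) * g (t - x) := by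
  have hper : Function.Periodic (fun x => f x * g (t + δ - x)) (2 * π) := fun x => by
    simp only [hf x, ← sub_sub, hg.sub_eq]
  calc circleConv f g (t + δ) = ∫ x in δ..δ + 2 * π, f x * g (t + δ - x) := by
        rw [circleConv, hper.intervalIntegral_add_eq δ 0, zero_add]
    _ = ∫ x in (0:ℝ)..2 * π, (fun x => f x * g (t + δ - x)) (x + δ) := by
        rw [intervalIntegral.integral_comp_add_right (fun x => f x * g (t + δ - x)) δ, zero_add,
          add_comm (2 * π)]
    _ = ∫ x in (0:ℝ)..2 * π, f (x + δ) * g (t - x) := by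
        simp only [add_sub_add_right_eq_sub]

theorem circleConv_secondDiff (hfc : Continuous f) (hgc : Continuous g)
    (hf : Function.Periodic f (2 * π)) (hg : Function.Periodic g (2 * π)) (t δ : ℝ) :
    circleConv f g (t + 2 * δ) - 2 * circleConv f g (t + δ) + circleConv f g t
      = ∫ x in (0:ℝ)..2 * π, (f (x + δ) - f x) * (g (t + δ - x) - g (t - x)) := by
  have hshift2 : circleConv f g (t + 2 * δ) - 2 * circleConv f g (t + δ) + circleConv f g t
      = (∫ x in (0:ℝ)..2 * π, f (x + δ) * g (t + δ - x)) - circleConv f g (t + δ)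
        - circleConv f g (t + δ) + circleConv f g t := by
    rw [two_mul δ, ← add_assoc, circleConv_add hf hg]; ring
  rw [hshift2]
  nth_rewrite 1 [circleConv_add hf hg t δ]
  unfold circleConv
  rw [← intervalIntegral.integral_sub, ← intervalIntegral.integral_sub,
    ← intervalIntegral.integral_add]
  · congr 1; ext x; ring
  all_goals exact Continuous.intervalIntegrable (by fun_prop) _ _

theorem abs_circleConv_secondDiff_le {α β Cf Cg : ℝ} (hfc : Continuous f) (hgc : Continuous g)
    (hf : Function.Periodic f (2 * π)) (hg : Function.Periodic g (2 * π))
    (hfα : ∀ x y, |f x - f y| ≤ Cf * |x - y| ^ α) (hgβ : ∀ x y, |g x - g y| ≤ Cg * |x - y| ^ β)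
    (t : ℝ) {δ : ℝ} (hδ : 0 < δ) :
    |circleConv f g (t + 2 * δ) - 2 * circleConv f g (t + δ) + circleConv f g t|
      ≤ 2 * π * Cf * Cg * δ ^ (α + β) := by
  rw [circleConv_secondDiff hfc hgc hf hg, ← norm_eq_abs]
  have hbound (x : ℝ) :
      ‖(f (x + δ) - f x) * (g (t + δ - x) - g (t - x))‖ ≤ Cf * Cg * δ ^ (α + β) := by
    have hfx := hfα (x + δ) x
    have hgx := hgβ (t + δ - x) (t - x)
    rw [add_sub_cancel_left, abs_of_pos hδ] at hfx
    rw [sub_sub_sub_cancel_right, add_sub_cancel_left, abs_of_pos hδ] at hgx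
    rw [norm_mul, norm_eq_abs, norm_eq_abs, rpow_add hδ, mul_mul_mul_comm]
    exact mul_le_mul hfx hgx (abs_nonneg _) ((abs_nonneg _).trans hfx)
  calc ‖∫ x in (0:ℝ)..2 * π, (f (x + δ) - f x) * (g (t + δ - x) - g (t - x))‖
      ≤ Cf * Cg * δ ^ (α + β) * |2 * π - 0| :=
        intervalIntegral.norm_integral_le_of_norm_le_const fun x _ => hbound x
    _ = 2 * π * Cf * Cg * δ ^ (α + β) := by rw [sub_zero, abs_of_pos two_pi_pos]; ring

end CircleConv

/-- Regularity of circle convolution of Hölder functions, case `α + β > 1`: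
the convolution is `C¹`, with derivative bounded by `(C/(α+β−1))·C_f·C_g` and
`(α+β−1)`-Hölder with constant `C·C_f·C_g`, where `C` depends only on `α`, `β`. -/
theorem stmt_2 (α β : ℝ) (hα : α ∈ Set.Ioo (0:ℝ) 1) (hβ : β ∈ Set.Ioo (0:ℝ) 1)
    (hαβ : 1 < α + β) :
    ∃ C : ℝ, 0 < C ∧
      ∀ (f g : ℝ → ℝ) (Cf Cg : ℝ), 0 ≤ Cf → 0 ≤ Cg →
        Continuous f → Continuous g →
        (∀ x, f (x + 2 * Real.pi) = f x) →
        (∀ x, g (x + 2 * Real.pi) = g x) →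
        (∀ x y, |f x - f y| ≤ Cf * |x - y| ^ α) →
        (∀ x y, |g x - g y| ≤ Cg * |x - y| ^ β) →
        ∃ h' : ℝ → ℝ, Continuous h' ∧
          (∀ t : ℝ, HasDerivAt
            (fun u => ∫ x in (0:ℝ)..(2 * Real.pi), f x * g (u - x)) (h' t) t) ∧
          (∀ t : ℝ, |h' t| ≤ C / (α + β - 1) * Cf * Cg) ∧
          (∀ t s : ℝ, |h' t - h' s| ≤ C * Cf * Cg * |t - s| ^ (α + β - 1)) := by
  have hσ : 0 < α + β - 1 := by linarith
  have hσ₁ : α + β - 1 ≤ 1 := by linarith [hα.2, hβ.2]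
  set σ := α + β - 1
  have h2σ : 0 < (2:ℝ) ^ σ - 1 := by linarith [one_lt_rpow one_lt_two hσ]
  set A := 2 * π / (2 ^ σ - 1) with hA
  refine ⟨A * (2 ^ σ + (2 * π) ^ σ), by positivity, ?_⟩
  intro f g Cf Cg hCf hCg hfc hgc hf hg hfα hgβ
  have H : HasSecondDiffBound (circleConv f g) (2 * π * Cf * Cg) σ := fun t δ hδ => by
    rw [show 1 + σ = α + β by ring]
    exact abs_circleConv_secondDiff_le hfc hgc hf hg hfα hgβ t hδ
  obtain ⟨h', hd⟩ := exists_hasDerivAt_of_secondDiff H (continuous_circleConv hfc hgc) hσ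
  have hHolder := abs_deriv_sub_le H hσ hd
  refine ⟨h', continuous_of_abs_sub_le_rpow hσ hHolder, hd, fun t => ?_, fun t s => ?_⟩
  · have hconst : (2 * π) ^ σ / 2 ≤ (2 ^ σ + (2 * π) ^ σ) / σ := by
      rw [le_div_iff₀ hσ]
      nlinarith [rpow_pos_of_pos two_pos σ, rpow_pos_of_pos two_pi_pos σ]
    calc |h' t| ≤ 2 * π * Cf * Cg / (2 * (2 ^ σ - 1)) * (2 * π) ^ σ :=
          abs_deriv_le_of_periodic H hσ hd (circleConv_periodic hg) two_pi_pos t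
      _ = A * ((2 * π) ^ σ / 2) * (Cf * Cg) := by rw [hA]; field_simp
      _ ≤ A * ((2 ^ σ + (2 * π) ^ σ) / σ) * (Cf * Cg) := by gcongr
      _ = A * (2 ^ σ + (2 * π) ^ σ) / σ * Cf * Cg := by ring
  · calc |h' t - h' s| ≤ 2 * π * Cf * Cg * 2 ^ σ / (2 ^ σ - 1) * |t - s| ^ σ := hHolder t s
      _ = A * 2 ^ σ * (Cf * Cg) * |t - s| ^ σ := by rw [hA]; ring
      _ ≤ A * (2 ^ σ + (2 * π) ^ σ) * (Cf * Cg) * |t - s| ^ σ := by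
          gcongr
          exact le_add_of_nonneg_right (by positivity)
      _ = A * (2 ^ σ + (2 * π) ^ σ) * Cf * Cg * |t - s| ^ σ := by ring
end

section
/- Let α, β ∈ (0,1) with α + β > 1. There is an absolute constant C such that for all continuous 2π-periodic functions f, g : ℝ → ℝ, if f is α-Hölder with constant C_f and g is β-Hölder with constant C_g, and h is their circle convolution, then the weighted sum of Fourier coefficients converges absolutely with ∑_{n ∈ ℤ} |n| · |ĥ(n)| ≤ (C/(α+β−1)) · C_f · C_g. -/
/-!
Bernstein's argument. Translating `u` by `δ` multiplies `û(n)` by `e^{inδ}`, so Parseval's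
identity for `u(· + δ) - u` bounds `∑ |e^{inδ} - 1|² |û(n)|²` by `C² δ^{2α}` when `u` is
`α`-Hölder with constant `C`. On the dyadic block `2^k ≤ |n| < 2^{k+1}` take `δ = π / 2^{k+1}`:
then `|e^{inδ} - 1| ≥ 1`, so the block carries at most `C² δ^{2α}` of `∑ |û(n)|²`. Since
`ĥ = 2π f̂ ĝ`, Cauchy–Schwarz on the block gives
`∑ |n| |ĥ(n)| ≤ 2^{k+1} · 2π C_f C_g δ^{α+β} = 2π² C_f C_g δ^{α+β-1}`,
which decays geometrically in `k` with ratio `2^{-(α+β-1)}`; summing the blocks costs the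
factor `(1 - 2^{-(α+β-1)})⁻¹ ≤ 2 / (α+β-1)`.
-/

open Real Complex MeasureTheory

noncomputable def circleCoeff (u : ℝ → ℂ) (n : ℤ) : ℂ :=
  (1 / (2 * (π : ℂ))) * ∫ t in (0:ℝ)..2 * π, u t * exp (-(I * n * t))

theorem intervalIntegral_integral_swap_of_continuous {E : Type*} [NormedAddCommGroup E]
    [NormedSpace ℝ E] [CompleteSpace E] {F : ℝ → ℝ → E} (hF : Continuous (Function.uncurry F))
    {a b c d : ℝ} (hab : a ≤ b) (hcd : c ≤ d) :
    ∫ x in a..b, ∫ y in c..d, F x y = ∫ y in c..d, ∫ x in a..b, F x y := by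
  simp only [intervalIntegral.integral_of_le hab, intervalIntegral.integral_of_le hcd]
  refine integral_integral_swap ?_
  rw [Measure.prod_restrict]
  exact (hF.continuousOn.integrableOn_compact (isCompact_Icc.prod isCompact_Icc)).mono_set
    (Set.prod_mono Set.Ioc_subset_Icc_self Set.Ioc_subset_Icc_self)

theorem rpow_div_two_pow_succ_le {x s : ℝ} (hx : 1 ≤ x) (hs0 : 0 ≤ s) (hs1 : s ≤ 1) (k : ℕ) :
    (x / 2 ^ (k + 1)) ^ s ≤ x * ((1 / 2) ^ s) ^ k := by
  rw [div_eq_mul_one_div, ← one_div_pow, mul_rpow (by positivity) (by positivity),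
    ← rpow_pow_comm (by norm_num)]
  exact mul_le_mul (by simpa using rpow_le_rpow_of_exponent_le hx hs1)
    (pow_le_pow_of_le_one (by positivity) (rpow_le_one (by norm_num) (by norm_num) hs0)
      (Nat.le_succ k)) (by positivity) (by positivity)

theorem div_two_le_one_sub_half_rpow {s : ℝ} (hs0 : 0 ≤ s) (hs1 : s ≤ 1) :
    s / 2 ≤ 1 - (1 / 2) ^ s := by
  have := rpow_one_add_le_one_add_mul_self (s := -1 / 2) (by norm_num) hs0 hs1
  norm_num at this
  linarith

theorem summable_and_tsum_le_of_dyadic_blocks {a : ℤ → ℝ} (ha : ∀ n, 0 ≤ a n) (ha0 : a 0 = 0)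
    {A r : ℝ} (hr0 : 0 ≤ r) (hr1 : r < 1)
    (hblock : ∀ (k : ℕ) (T : Finset ℤ), (∀ n ∈ T, 2 ^ k ≤ n.natAbs ∧ n.natAbs < 2 ^ (k + 1)) →
      ∑ n ∈ T, a n ≤ A * r ^ k) :
    Summable a ∧ ∑' n, a n ≤ A / (1 - r) := by
  have hA : 0 ≤ A := by simpa using hblock 0 ∅ (by simp)
  have hpartial : ∀ S : Finset ℤ, ∑ n ∈ S, a n ≤ A / (1 - r) := by
    intro S
    let level : ℤ → ℕ := fun n => Nat.log 2 n.natAbs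
    have hmaps : ∀ n ∈ S.erase 0, level n ∈ Finset.range ((S.erase 0).sup level + 1) :=
      fun n hn => Finset.mem_range_succ_iff.2 (Finset.le_sup hn)
    have hlevel : ∀ k, ∀ n ∈ (S.erase 0).filter (level · = k),
        2 ^ k ≤ n.natAbs ∧ n.natAbs < 2 ^ (k + 1) := by
      intro k n hn
      obtain ⟨hn0, rfl⟩ := Finset.mem_filter.1 hn
      exact ⟨Nat.pow_log_le_self 2 (Int.natAbs_ne_zero.2 (Finset.ne_of_mem_erase hn0)),
        Nat.lt_pow_succ_log_self (by norm_num) _⟩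
    rw [← Finset.sum_erase S ha0, ← Finset.sum_fiberwise_of_maps_to hmaps]
    calc ∑ k ∈ Finset.range ((S.erase 0).sup level + 1),
          ∑ n ∈ (S.erase 0).filter (level · = k), a n
        ≤ ∑ k ∈ Finset.range ((S.erase 0).sup level + 1), A * r ^ k :=
          Finset.sum_le_sum fun k _ => hblock k _ (hlevel k)
      _ ≤ A / (1 - r) := by
          rw [← Finset.mul_sum, ← mul_one_div]
          gcongr
          simpa using geom_sum_Ico_le_of_lt_one (m := 0) hr0 hr1
  have hsum : Summable a := summable_of_sum_le ha hpartial
  exact ⟨hsum, hsum.tsum_le_of_sum_le hpartial⟩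

theorem one_le_norm_exp_mul_I_sub_one {θ : ℝ} (h1 : π / 2 ≤ |θ|) (h2 : |θ| ≤ 3 * π / 2) :
    1 ≤ ‖exp (θ * I) - 1‖ := by
  have hcos : Real.cos θ ≤ 0 := by
    rw [← Real.cos_abs]
    exact Real.cos_nonpos_of_pi_div_two_le_of_le h1 (by linarith)
  calc (1:ℝ) ≤ |(exp (θ * I) - 1).re| := by
        rw [sub_re, one_re, exp_ofReal_mul_I_re, abs_of_nonpos (by linarith)]
        linarith
    _ ≤ ‖exp (θ * I) - 1‖ := abs_re_le_norm _

theorem one_le_norm_exp_dyadic_sub_one {n : ℤ} {k : ℕ}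
    (hn : 2 ^ k ≤ n.natAbs ∧ n.natAbs < 2 ^ (k + 1)) :
    1 ≤ ‖exp (I * n * ↑(π / 2 ^ (k + 1))) - 1‖ := by
  have habs : |(n : ℝ) * (π / 2 ^ (k + 1))| = n.natAbs * π / (2 * 2 ^ k) := by
    rw [abs_mul, abs_of_pos (a := π / 2 ^ (k + 1)) (by positivity), Nat.cast_natAbs,
      Int.cast_abs, pow_succ]
    ring
  have hlo : (2:ℝ) ^ k ≤ n.natAbs := by exact_mod_cast hn.1
  have hhi : (n.natAbs : ℝ) ≤ 2 * 2 ^ k := by rw [← pow_succ']; exact_mod_cast hn.2.le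
  rw [show I * n * ↑(π / 2 ^ (k + 1)) = ↑((n : ℝ) * (π / 2 ^ (k + 1))) * I by push_cast; ring]
  apply one_le_norm_exp_mul_I_sub_one <;> rw [habs]
  · rw [le_div_iff₀ (by positivity)]; nlinarith [pi_pos]
  · rw [div_le_iff₀ (by positivity)]; nlinarith [pi_pos]

theorem circleCoeff_eq_fourierCoeffOn (u : ℝ → ℂ) (n : ℤ) :
    circleCoeff u n = fourierCoeffOn two_pi_pos u n := by
  rw [fourierCoeffOn_eq_integral, circleCoeff, sub_zero, Complex.real_smul]
  push_cast
  congr 1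
  refine intervalIntegral.integral_congr fun x _ => ?_
  rw [fourier_coe_apply, smul_eq_mul, mul_comm]
  congr 2
  field_simp
  push_cast
  ring

theorem hasSum_norm_sq_circleCoeff {u : ℝ → ℂ} (hu : Continuous u) :
    HasSum (fun n => ‖circleCoeff u n‖ ^ 2) ((2 * π)⁻¹ * ∫ x in (0:ℝ)..2 * π, ‖u x‖ ^ 2) := by
  obtain ⟨C, hC⟩ :=
    (isCompact_Icc (a := (0:ℝ)) (b := 2 * π)).exists_bound_of_continuousOn hu.continuousOn
  have hL2 : MemLp u 2 (volume.restrict (Set.Ioc 0 (2 * π))) :=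
    .of_bound hu.aestronglyMeasurable C <|
      ae_restrict_of_forall_mem measurableSet_Ioc fun x hx => hC x (Set.Ioc_subset_Icc_self hx)
  simpa [circleCoeff_eq_fourierCoeffOn] using hasSum_sq_fourierCoeffOn two_pi_pos hL2

theorem integral_mul_exp_eq_two_pi_mul_circleCoeff (u : ℝ → ℂ) (n : ℤ) :
    ∫ t in (0:ℝ)..2 * π, u t * exp (-(I * n * t)) = 2 * π * circleCoeff u n := by
  rw [circleCoeff, ← mul_assoc, mul_one_div_cancel (by simp [pi_ne_zero]), one_mul]

theorem circleCoeff_sub {u v : ℝ → ℂ} (hu : Continuous u) (hv : Continuous v) (n : ℤ) :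
    circleCoeff (fun x => u x - v x) n = circleCoeff u n - circleCoeff v n := by
  simp only [circleCoeff, sub_mul]
  rw [intervalIntegral.integral_sub (Continuous.intervalIntegrable (by fun_prop) _ _)
    (Continuous.intervalIntegrable (by fun_prop) _ _), mul_sub]

theorem periodic_exp_neg_I_int_mul (n : ℤ) :
    Function.Periodic (fun x : ℝ => exp (-(I * n * x))) (2 * π) := by
  intro x
  dsimp only
  rw [show -(I * n * ↑(x + 2 * π)) = -(I * n * x) + (-n : ℤ) * (2 * π * I) by push_cast; ring,
    Complex.exp_add, exp_int_mul_two_pi_mul_I, mul_one]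

theorem circleCoeff_comp_add_right {u : ℝ → ℂ} (hper : Function.Periodic u (2 * π)) (δ : ℝ)
    (n : ℤ) : circleCoeff (fun x => u (x + δ)) n = exp (I * n * δ) * circleCoeff u n := by
  have hshift : ∀ x : ℝ, u (x + δ) * exp (-(I * n * x))
      = exp (I * n * δ) * (u (x + δ) * exp (-(I * n * ↑(x + δ)))) := by
    intro x
    rw [mul_left_comm, ← Complex.exp_add]
    push_cast
    ring_nf
  have hperiod : Function.Periodic (fun x => u x * exp (-(I * n * x))) (2 * π) :=
    hper.mul (periodic_exp_neg_I_int_mul n)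
  simp only [circleCoeff, hshift, intervalIntegral.integral_const_mul]
  rw [intervalIntegral.integral_comp_add_right (fun x => u x * exp (-(I * n * x))), zero_add,
    add_comm _ δ, hperiod.intervalIntegral_add_eq δ 0, zero_add]
  ring

theorem circleCoeff_conv {f g : ℝ → ℂ} (hf : Continuous f) (hg : Continuous g)
    (hper : Function.Periodic g (2 * π)) (n : ℤ) :
    circleCoeff (fun t => ∫ x in (0:ℝ)..2 * π, f x * g (t - x)) n
      = 2 * π * circleCoeff f n * circleCoeff g n := by
  have hinner : ∀ x : ℝ, ∫ t in (0:ℝ)..2 * π, f x * g (t - x) * exp (-(I * n * t))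
      = 2 * π * (f x * exp (-(I * n * x))) * circleCoeff g n := fun x => by
    calc ∫ t in (0:ℝ)..2 * π, f x * g (t - x) * exp (-(I * n * t))
        = f x * ∫ t in (0:ℝ)..2 * π, g (t + -x) * exp (-(I * n * t)) := by
          simp only [← intervalIntegral.integral_const_mul, sub_eq_add_neg, mul_assoc]
      _ = _ := by
          rw [integral_mul_exp_eq_two_pi_mul_circleCoeff, circleCoeff_comp_add_right hper,
            ofReal_neg, mul_neg]
          ring
  have hswap := intervalIntegral_integral_swap_of_continuous
    (F := fun x t => f x * g (t - x) * exp (-(I * n * t))) (by fun_prop)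
    two_pi_pos.le two_pi_pos.le
  rw [circleCoeff]
  simp only [← intervalIntegral.integral_mul_const, ← hswap, hinner]
  rw [intervalIntegral.integral_mul_const, intervalIntegral.integral_const_mul,
    integral_mul_exp_eq_two_pi_mul_circleCoeff]
  field_simp

theorem norm_circleCoeff_ofReal_conv {f g : ℝ → ℝ} (hf : Continuous f) (hg : Continuous g)
    (hper : Function.Periodic g (2 * π)) (n : ℤ) :
    ‖circleCoeff (fun t => ((∫ x in (0:ℝ)..2 * π, f x * g (t - x) : ℝ) : ℂ)) n‖
      = 2 * π * (‖circleCoeff (fun x => (f x : ℂ)) n‖ * ‖circleCoeff (fun x => (g x : ℂ)) n‖) := by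
  simp only [← intervalIntegral.integral_ofReal, ofReal_mul]
  rw [circleCoeff_conv (f := fun x => (f x : ℂ)) (g := fun x => (g x : ℂ)) (by fun_prop)
    (by fun_prop) (hper.comp ofReal), norm_mul, norm_mul, mul_assoc]
  simp [abs_of_pos pi_pos]

theorem sum_norm_sq_circleCoeff_le_of_shift {u : ℝ → ℂ} (hu : Continuous u)
    (hper : Function.Periodic u (2 * π)) {δ ε : ℝ} (hε : ∀ x, ‖u (x + δ) - u x‖ ≤ ε)
    {S : Finset ℤ} (hS : ∀ n ∈ S, 1 ≤ ‖exp (I * n * δ) - 1‖) :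
    ∑ n ∈ S, ‖circleCoeff u n‖ ^ 2 ≤ ε ^ 2 := by
  have hv : Continuous fun x => u (x + δ) - u x := by fun_prop
  have hcoeff : ∀ n, circleCoeff (fun x => u (x + δ) - u x) n
      = (exp (I * n * δ) - 1) * circleCoeff u n := fun n => by
    rw [circleCoeff_sub (by fun_prop) hu, circleCoeff_comp_add_right hper, sub_one_mul]
  have hmean : (2 * π)⁻¹ * ∫ x in (0:ℝ)..2 * π, ‖u (x + δ) - u x‖ ^ 2 ≤ ε ^ 2 := by
    have hint : ∫ x in (0:ℝ)..2 * π, ‖u (x + δ) - u x‖ ^ 2 ≤ ∫ _ in (0:ℝ)..2 * π, ε ^ 2 :=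
      intervalIntegral.integral_mono_on two_pi_pos.le
        (Continuous.intervalIntegrable (by fun_prop) _ _)
        intervalIntegrable_const fun x _ => pow_le_pow_left₀ (norm_nonneg _) (hε x) 2
    rw [intervalIntegral.integral_const, smul_eq_mul, sub_zero] at hint
    calc (2 * π)⁻¹ * ∫ x in (0:ℝ)..2 * π, ‖u (x + δ) - u x‖ ^ 2
        ≤ (2 * π)⁻¹ * (2 * π * ε ^ 2) := by gcongr
      _ = ε ^ 2 := by field_simp
  calc ∑ n ∈ S, ‖circleCoeff u n‖ ^ 2
      ≤ ∑ n ∈ S, ‖circleCoeff (fun x => u (x + δ) - u x) n‖ ^ 2 := by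
        refine Finset.sum_le_sum fun n hn => ?_
        rw [hcoeff, norm_mul, mul_pow]
        exact le_mul_of_one_le_left (by positivity) (one_le_pow₀ (hS n hn))
    _ ≤ (2 * π)⁻¹ * ∫ x in (0:ℝ)..2 * π, ‖u (x + δ) - u x‖ ^ 2 :=
        sum_le_hasSum S (fun _ _ => by positivity) (hasSum_norm_sq_circleCoeff hv)
    _ ≤ ε ^ 2 := hmean

theorem sum_norm_sq_circleCoeff_dyadic_le {u : ℝ → ℂ} (hu : Continuous u)
    (hper : Function.Periodic u (2 * π)) {C α : ℝ} (hhol : ∀ x y, ‖u x - u y‖ ≤ C * |x - y| ^ α)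
    {k : ℕ} {T : Finset ℤ} (hT : ∀ n ∈ T, 2 ^ k ≤ n.natAbs ∧ n.natAbs < 2 ^ (k + 1)) :
    ∑ n ∈ T, ‖circleCoeff u n‖ ^ 2 ≤ (C * (π / 2 ^ (k + 1)) ^ α) ^ 2 := by
  refine sum_norm_sq_circleCoeff_le_of_shift hu hper (fun x => ?_)
    fun n hn => one_le_norm_exp_dyadic_sub_one (hT n hn)
  simpa [abs_of_pos (show 0 < π / 2 ^ (k + 1) by positivity)] using hhol (x + π / 2 ^ (k + 1)) x

theorem sum_abs_mul_norm_circleCoeff_mul_le {f g : ℝ → ℂ} (hf : Continuous f)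
    (hg : Continuous g) (hfper : Function.Periodic f (2 * π))
    (hgper : Function.Periodic g (2 * π)) {Cf Cg α β : ℝ}
    (hfhol : ∀ x y, ‖f x - f y‖ ≤ Cf * |x - y| ^ α)
    (hghol : ∀ x y, ‖g x - g y‖ ≤ Cg * |x - y| ^ β)
    {k : ℕ} {T : Finset ℤ} (hT : ∀ n ∈ T, 2 ^ k ≤ n.natAbs ∧ n.natAbs < 2 ^ (k + 1)) :
    ∑ n ∈ T, |(n : ℝ)| * (‖circleCoeff f n‖ * ‖circleCoeff g n‖)
      ≤ π * Cf * Cg * (π / 2 ^ (k + 1)) ^ (α + β - 1) := by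
  set δ := π / 2 ^ (k + 1) with hδ_def
  have hδ : 0 < δ := by positivity
  have hf0 : 0 ≤ Cf * δ ^ α :=
    (norm_nonneg _).trans (by simpa [abs_of_pos hδ] using hfhol δ 0)
  have hg0 : 0 ≤ Cg * δ ^ β :=
    (norm_nonneg _).trans (by simpa [abs_of_pos hδ] using hghol δ 0)
  have hcs : ∑ n ∈ T, ‖circleCoeff f n‖ * ‖circleCoeff g n‖ ≤ Cf * δ ^ α * (Cg * δ ^ β) := by
    refine (Real.sum_mul_le_sqrt_mul_sqrt _ _ _).trans (mul_le_mul ?_ ?_ (by positivity) hf0)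
    · rw [← Real.sqrt_sq hf0]
      exact Real.sqrt_le_sqrt (sum_norm_sq_circleCoeff_dyadic_le hf hfper hfhol hT)
    · rw [← Real.sqrt_sq hg0]
      exact Real.sqrt_le_sqrt (sum_norm_sq_circleCoeff_dyadic_le hg hgper hghol hT)
  have habs : ∀ n ∈ T, |(n : ℝ)| ≤ 2 ^ (k + 1) := fun n hn => by
    rw [← Int.cast_abs, ← Nat.cast_natAbs]
    exact_mod_cast (hT n hn).2.le
  calc ∑ n ∈ T, |(n : ℝ)| * (‖circleCoeff f n‖ * ‖circleCoeff g n‖)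
      ≤ ∑ n ∈ T, 2 ^ (k + 1) * (‖circleCoeff f n‖ * ‖circleCoeff g n‖) :=
        Finset.sum_le_sum fun n hn => by gcongr; exact habs n hn
    _ = 2 ^ (k + 1) * ∑ n ∈ T, ‖circleCoeff f n‖ * ‖circleCoeff g n‖ := by rw [Finset.mul_sum]
    _ ≤ 2 ^ (k + 1) * (Cf * δ ^ α * (Cg * δ ^ β)) := by gcongr
    _ = π * Cf * Cg * δ ^ (α + β - 1) := by
        rw [rpow_sub hδ, rpow_add hδ, rpow_one, hδ_def]
        field_simp

theorem sum_abs_mul_norm_circleCoeff_conv_le {f g : ℝ → ℝ} (hf : Continuous f)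
    (hg : Continuous g) (hfper : Function.Periodic f (2 * π))
    (hgper : Function.Periodic g (2 * π)) {Cf Cg α β : ℝ} (hCf : 0 ≤ Cf) (hCg : 0 ≤ Cg)
    (hfhol : ∀ x y, |f x - f y| ≤ Cf * |x - y| ^ α) (hghol : ∀ x y, |g x - g y| ≤ Cg * |x - y| ^ β)
    (hs0 : 0 ≤ α + β - 1) (hs1 : α + β - 1 ≤ 1)
    {k : ℕ} {T : Finset ℤ} (hT : ∀ n ∈ T, 2 ^ k ≤ n.natAbs ∧ n.natAbs < 2 ^ (k + 1)) :
    ∑ n ∈ T, |(n : ℝ)| *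
        ‖circleCoeff (fun t => ((∫ x in (0:ℝ)..2 * π, f x * g (t - x) : ℝ) : ℂ)) n‖
      ≤ 2 * π ^ 3 * Cf * Cg * ((1 / 2) ^ (α + β - 1)) ^ k := by
  have hfhol' : ∀ x y, ‖(f x : ℂ) - f y‖ ≤ Cf * |x - y| ^ α := by simpa [← ofReal_sub] using hfhol
  have hghol' : ∀ x y, ‖(g x : ℂ) - g y‖ ≤ Cg * |x - y| ^ β := by simpa [← ofReal_sub] using hghol
  calc _ = 2 * π * ∑ n ∈ T, |(n : ℝ)| *
          (‖circleCoeff (fun x => (f x : ℂ)) n‖ * ‖circleCoeff (fun x => (g x : ℂ)) n‖) := by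
        rw [Finset.mul_sum]
        exact Finset.sum_congr rfl fun n _ => by
          rw [norm_circleCoeff_ofReal_conv hf hg hgper]; ring
    _ ≤ 2 * π * (π * Cf * Cg * (π / 2 ^ (k + 1)) ^ (α + β - 1)) := by
        gcongr
        exact sum_abs_mul_norm_circleCoeff_mul_le (by fun_prop) (by fun_prop)
          (hfper.comp ofReal) (hgper.comp ofReal) hfhol' hghol' hT
    _ ≤ 2 * π * (π * Cf * Cg * (π * ((1 / 2) ^ (α + β - 1)) ^ k)) := by
        gcongr
        exact rpow_div_two_pow_succ_le (by linarith [pi_gt_three]) hs0 hs1 k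
    _ = _ := by ring

/-- For the circle convolution `h` of an `α`-Hölder function `f` and a `β`-Hölder
function `g`, with `α + β > 1`, the weighted sum of Fourier coefficients
`∑_{n ∈ ℤ} |n|·|ĥ(n)|` converges absolutely and is bounded by
`(C/(α+β−1))·C_f·C_g` for an absolute constant `C`. -/
theorem stmt_5 (α β : ℝ) (hα : α ∈ Set.Ioo (0:ℝ) 1) (hβ : β ∈ Set.Ioo (0:ℝ) 1)
    (hαβ : 1 < α + β) :
    ∃ C : ℝ, 0 < C ∧
      ∀ (f g : ℝ → ℝ) (Cf Cg : ℝ), 0 ≤ Cf → 0 ≤ Cg →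
        Continuous f → Continuous g →
        (∀ x, f (x + 2 * Real.pi) = f x) →
        (∀ x, g (x + 2 * Real.pi) = g x) →
        (∀ x y, |f x - f y| ≤ Cf * |x - y| ^ α) →
        (∀ x y, |g x - g y| ≤ Cg * |x - y| ^ β) →
        Summable (fun n : ℤ => (|n| : ℝ) *
          ‖(1 / (2 * (Real.pi : ℂ))) *
            ∫ t in (0:ℝ)..(2 * Real.pi),
              ((∫ x in (0:ℝ)..(2 * Real.pi), f x * g (t - x) : ℝ) : ℂ) *
                Complex.exp (-(Complex.I * (n : ℂ) * (t : ℂ)))‖) ∧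
        (∑' n : ℤ, (|n| : ℝ) *
          ‖(1 / (2 * (Real.pi : ℂ))) *
            ∫ t in (0:ℝ)..(2 * Real.pi),
              ((∫ x in (0:ℝ)..(2 * Real.pi), f x * g (t - x) : ℝ) : ℂ) *
                Complex.exp (-(Complex.I * (n : ℂ) * (t : ℂ)))‖)
          ≤ C / (α + β - 1) * Cf * Cg := by
  refine ⟨4 * π ^ 3, by positivity,
    fun f g Cf Cg hCf hCg hf hg hfper hgper hfhol hghol => ?_⟩
  have hs0 : 0 < α + β - 1 := by linarith
  have hs1 : α + β - 1 ≤ 1 := by linarith [hα.2, hβ.2]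
  have hr := div_two_le_one_sub_half_rpow hs0.le hs1
  obtain ⟨hsum, htsum⟩ := summable_and_tsum_le_of_dyadic_blocks (fun n => by positivity)
    (by simp) (by positivity) (by linarith) fun k T hT =>
      sum_abs_mul_norm_circleCoeff_conv_le hf hg hfper hgper hCf hCg hfhol hghol hs0.le hs1 hT
  refine ⟨hsum, htsum.trans ?_⟩
  calc 2 * π ^ 3 * Cf * Cg / (1 - (1 / 2) ^ (α + β - 1))
      ≤ 2 * π ^ 3 * Cf * Cg / ((α + β - 1) / 2) := by gcongr
    _ = 4 * π ^ 3 / (α + β - 1) * Cf * Cg := by field_simp; ring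
end
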